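/- The function t ↦ G⁻¹(t)/t is nondecreasing on (0, ∞) and nonincreasing on (−∞, 0); in fact its derivative equals (t − G⁻¹(t)·g(G⁻¹(t)))/(g(G⁻¹(t))·t²), which is ≥ 0 for t > 0 and < 0 for t < 0. -/

import Mathlib

open Real Filter Set

/-- The constant α = (9+3√5)/2. -/
noncomputable def alph : ℝ := (9 + 3 * Real.sqrt 5) / 2

/-- The constant β = 2 α^{3/2} √(α−1). -/
noncomputable def bet : ℝ := 2 * alph ^ ((3 : ℝ) / 2) * Real.sqrt (alph - 1)

/-- The change-of-variable function g (extended evenly to negative arguments):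
g(s) = √(1 − k s²) for |s| < (αk)^{−1/2}, and g(s) = 1/(βk s²) + √3/2 for |s| ≥ (αk)^{−1/2}. -/
noncomputable def g (k s : ℝ) : ℝ :=
  if |s| < 1 / Real.sqrt (alph * k) then Real.sqrt (1 - k * s ^ 2)
  else 1 / (bet * k * s ^ 2) + Real.sqrt 3 / 2

/-- G(t) = ∫₀ᵗ g(s) ds. -/
noncomputable def G (k t : ℝ) : ℝ := ∫ s in (0 : ℝ)..t, g k s

/-! The inverse function theorem gives `(G⁻¹)' = 1 / g ∘ G⁻¹`, and the quotient rule
the formula. With `x = G⁻¹ t`, the numerator is `t - x g(x) = ∫₀ˣ (g s - g x) ds`, which has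
the sign of `x` because `g k s` is a strictly decreasing continuous function of `k s²`:
the constants α and β are chosen so that the two branches of `g` agree at `k s² = 1/α`. -/

section IntegralInverse

variable {f φ : ℝ → ℝ}

theorem mul_le_integral_of_antitoneOn {x : ℝ} (hx : 0 ≤ x) (hf : AntitoneOn f (Icc 0 x)) :
    x * f x ≤ ∫ s in (0 : ℝ)..x, f s := by
  have hint : IntervalIntegrable f MeasureTheory.volume 0 x :=
    (uIcc_of_le hx ▸ hf).intervalIntegrable
  calc x * f x = ∫ _ in (0 : ℝ)..x, f x := by simp
    _ ≤ ∫ s in (0 : ℝ)..x, f s :=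
      intervalIntegral.integral_mono_on hx intervalIntegrable_const hint
        fun s hs => hf hs ⟨hx, le_rfl⟩ hs.2

theorem integral_lt_mul_of_strictMonoOn {x : ℝ} (hx : x < 0) (hf : StrictMonoOn f (Icc x 0)) :
    ∫ s in (0 : ℝ)..x, f s < x * f x := by
  have hint : IntervalIntegrable f MeasureTheory.volume x 0 :=
    (uIcc_of_le hx.le ▸ hf.monotoneOn).intervalIntegrable
  have hgap : 0 < ∫ s in x..0, (f s - f x) :=
    intervalIntegral.intervalIntegral_pos_of_pos_on (hint.sub intervalIntegrable_const)
      (fun s hs => sub_pos.2 (hf ⟨le_rfl, hx.le⟩ (Ioo_subset_Icc_self hs) hs.1)) hx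
  rw [intervalIntegral.integral_sub hint intervalIntegrable_const,
    intervalIntegral.integral_const, smul_eq_mul] at hgap
  rw [intervalIntegral.integral_symm]
  linarith

theorem strictMono_integral_of_pos (hf : Continuous f) (hpos : ∀ x, 0 < f x) :
    StrictMono fun t => ∫ s in (0 : ℝ)..t, f s :=
  strictMono_of_deriv_pos fun x => (hf.deriv_integral f 0 x).symm ▸ hpos x

theorem hasDerivAt_inverse_integral (hf : Continuous f) (hpos : ∀ x, 0 < f x)
    (hL : Function.LeftInverse φ fun t => ∫ s in (0 : ℝ)..t, f s)
    (hR : Function.RightInverse φ fun t => ∫ s in (0 : ℝ)..t, f s) (t : ℝ) :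
    HasDerivAt φ (f (φ t))⁻¹ t := by
  have hmono : Monotone φ := fun a b hab =>
    (strictMono_integral_of_pos hf hpos).le_iff_le.1 (by simpa only [hR a, hR b] using hab)
  exact (hf.integral_hasStrictDerivAt 0 (φ t)).hasDerivAt.of_local_left_inverse
    (hmono.continuous_of_surjective hL.surjective).continuousAt (hpos _).ne'
    (Eventually.of_forall hR)

theorem hasDerivAt_inverse_integral_div (hf : Continuous f) (hpos : ∀ x, 0 < f x)
    (hL : Function.LeftInverse φ fun t => ∫ s in (0 : ℝ)..t, f s)
    (hR : Function.RightInverse φ fun t => ∫ s in (0 : ℝ)..t, f s) {t : ℝ} (ht : t ≠ 0) :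
    HasDerivAt (fun s => φ s / s) ((t - φ t * f (φ t)) / (f (φ t) * t ^ 2)) t := by
  have := (hpos (φ t)).ne'
  exact ((hasDerivAt_inverse_integral hf hpos hL hR t).div (hasDerivAt_id' t) ht).congr_deriv
    (by field_simp)

theorem inverse_integral_mul_le (hf : Continuous f) (hpos : ∀ x, 0 < f x)
    (hR : Function.RightInverse φ fun t => ∫ s in (0 : ℝ)..t, f s)
    (hanti : AntitoneOn f (Ici 0)) {t : ℝ} (ht : 0 < t) : φ t * f (φ t) ≤ t := by
  have hx : 0 < φ t := (strictMono_integral_of_pos hf hpos).lt_iff_lt.1 <| by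
    simpa only [hR t, intervalIntegral.integral_same] using ht
  exact (mul_le_integral_of_antitoneOn hx.le (hanti.mono Icc_subset_Ici_self)).trans_eq (hR t)

theorem lt_inverse_integral_mul (hf : Continuous f) (hpos : ∀ x, 0 < f x)
    (hR : Function.RightInverse φ fun t => ∫ s in (0 : ℝ)..t, f s)
    (hmono : StrictMonoOn f (Iic 0)) {t : ℝ} (ht : t < 0) : t < φ t * f (φ t) := by
  have hx : φ t < 0 := (strictMono_integral_of_pos hf hpos).lt_iff_lt.1 <| by
    simpa only [hR t, intervalIntegral.integral_same] using ht
  exact (hR t).symm.trans_lt (integral_lt_mul_of_strictMonoOn hx (hmono.mono Icc_subset_Iic_self))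

end IntegralInverse

theorem one_lt_alph : 1 < alph := by
  unfold alph
  nlinarith [Real.sqrt_nonneg 5]

theorem alph_pos : 0 < alph := one_pos.trans one_lt_alph

theorem one_div_alph_lt_one : 1 / alph < 1 := by
  rw [div_lt_one alph_pos]
  exact one_lt_alph

theorem sqrt_alph_mul_alph_sub_one : √(alph * (alph - 1)) = √3 * (2 + √5) := by
  have h3 : √3 ^ 2 = 3 := Real.sq_sqrt (by norm_num)
  have h5 : √5 ^ 2 = 5 := Real.sq_sqrt (by norm_num)
  rw [← Real.sqrt_sq (by positivity : 0 ≤ √3 * (2 + √5))]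
  congr 1
  unfold alph
  linear_combination (-3 / 4) * h5 - (2 + √5) ^ 2 * h3

theorem bet_eq : bet = 2 * alph * √(alph * (alph - 1)) := by
  rw [bet, show (3 : ℝ) / 2 = 1 + 1 / 2 by norm_num, Real.rpow_add alph_pos, Real.rpow_one,
    ← Real.sqrt_eq_rpow, Real.sqrt_mul alph_pos.le]
  ring

theorem bet_pos : 0 < bet :=
  mul_pos (mul_pos two_pos (Real.rpow_pos_of_pos alph_pos _))
    (Real.sqrt_pos.2 (sub_pos.2 one_lt_alph))

theorem sqrt_one_sub_inv_alph : √(1 - 1 / alph) = √3 * (1 + √5) / 6 := by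
  have h3 : √3 ^ 2 = 3 := Real.sq_sqrt (by norm_num)
  have h5 : √5 ^ 2 = 5 := Real.sq_sqrt (by norm_num)
  rw [← Real.sqrt_sq (by positivity : 0 ≤ √3 * (1 + √5) / 6)]
  congr 1
  have : (9 : ℝ) + 3 * √5 ≠ 0 := by positivity
  unfold alph
  field_simp
  linear_combination (-((1 + √5) ^ 2 * (9 + 3 * √5))) * h3 - (45 + 9 * √5) * h5

theorem alph_div_bet_add_sqrt_three_div_two : alph / bet + √3 / 2 = √(1 - 1 / alph) := by
  have h3 : √3 ^ 2 = 3 := Real.sq_sqrt (by norm_num)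
  have h5 : √5 ^ 2 = 5 := Real.sq_sqrt (by norm_num)
  have : alph ≠ 0 := alph_pos.ne'
  have : √3 ≠ 0 := by positivity
  have : (2 : ℝ) + √5 ≠ 0 := by positivity
  rw [bet_eq, sqrt_alph_mul_alph_sub_one, sqrt_one_sub_inv_alph]
  field_simp
  linear_combination (8 - 2 * √5 ^ 2) * h3 - 6 * h5

noncomputable def gProfile (u : ℝ) : ℝ :=
  if u ≤ 1 / alph then √(1 - u) else 1 / (bet * u) + √3 / 2

theorem gProfile_of_le {u : ℝ} (hu : u ≤ 1 / alph) : gProfile u = √(1 - u) := if_pos hu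

theorem gProfile_of_ge {u : ℝ} (hu : 1 / alph ≤ u) : gProfile u = 1 / (bet * u) + √3 / 2 := by
  rcases hu.lt_or_eq with hu | rfl
  · exact if_neg hu.not_ge
  · rw [gProfile_of_le le_rfl, mul_one_div, one_div_div, alph_div_bet_add_sqrt_three_div_two]

theorem g_eq_gProfile {k : ℝ} (hk : 0 < k) (s : ℝ) : g k s = gProfile (k * s ^ 2) := by
  have hiff : |s| < 1 / √(alph * k) ↔ k * s ^ 2 < 1 / alph := by
    have hαk := mul_pos alph_pos hk
    rw [← Real.sqrt_one, ← Real.sqrt_div' _ hαk.le, Real.lt_sqrt (abs_nonneg s), sq_abs,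
      lt_div_iff₀ hαk, lt_div_iff₀ alph_pos]
    ring_nf
  unfold g
  split_ifs with h
  · exact (gProfile_of_le (hiff.1 h).le).symm
  · rw [gProfile_of_ge (not_lt.1 (hiff.not.1 h)), mul_assoc]

theorem bet_mul_pos_of_ge {u : ℝ} (hu : 1 / alph ≤ u) : 0 < bet * u :=
  mul_pos bet_pos ((one_div_pos.2 alph_pos).trans_le hu)

theorem gProfile_pos (u : ℝ) : 0 < gProfile u := by
  rcases le_total u (1 / alph) with hu | hu
  · rw [gProfile_of_le hu, Real.sqrt_pos]
    linarith [one_div_alph_lt_one]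
  · have := bet_mul_pos_of_ge hu
    rw [gProfile_of_ge hu]
    positivity

theorem continuous_gProfile : Continuous gProfile := by
  refine continuous_if_le continuous_id continuous_const (by fun_prop) ?_ ?_
  · exact (continuousOn_const.div (by fun_prop) fun u hu => (bet_mul_pos_of_ge hu).ne').add
      continuousOn_const
  · intro u hu
    rw [← gProfile_of_le hu.le, gProfile_of_ge hu.ge]

theorem strictAnti_gProfile : StrictAnti gProfile := by
  have hleft : StrictAntiOn gProfile (Iic (1 / alph)) := fun a ha b hb hab => by
    rw [gProfile_of_le ha, gProfile_of_le hb]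
    exact Real.sqrt_lt_sqrt (by linarith [one_div_alph_lt_one, mem_Iic.1 hb]) (by linarith)
  have hright : StrictAntiOn gProfile (Ici (1 / alph)) := fun a ha b hb hab => by
    rw [gProfile_of_ge ha, gProfile_of_ge hb, add_lt_add_iff_right]
    exact one_div_lt_one_div_of_lt (bet_mul_pos_of_ge ha) (mul_lt_mul_of_pos_left hab bet_pos)
  have := hleft.union hright isGreatest_Iic isLeast_Ici
  rwa [Iic_union_Ici, strictAntiOn_univ] at this

section

variable {k : ℝ}

theorem g_pos (hk : 0 < k) (s : ℝ) : 0 < g k s :=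
  g_eq_gProfile hk s ▸ gProfile_pos _

theorem continuous_g (hk : 0 < k) : Continuous (g k) := by
  rw [funext (g_eq_gProfile hk)]
  exact continuous_gProfile.comp (by fun_prop)

theorem strictAntiOn_g (hk : 0 < k) : StrictAntiOn (g k) (Ici 0) := fun a ha b _ hab => by
  rw [g_eq_gProfile hk, g_eq_gProfile hk]
  exact strictAnti_gProfile (mul_lt_mul_of_pos_left (pow_lt_pow_left₀ hab ha two_ne_zero) hk)

theorem strictMonoOn_g (hk : 0 < k) : StrictMonoOn (g k) (Iic 0) := fun a _ b hb hab => by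
  rw [g_eq_gProfile hk, g_eq_gProfile hk]
  exact strictAnti_gProfile (mul_lt_mul_of_pos_left (by nlinarith [mem_Iic.1 hb]) hk)

end

/-- t ↦ G⁻¹(t)/t is nondecreasing on (0, ∞) and nonincreasing on (−∞, 0); its derivative
equals (t − G⁻¹(t)g(G⁻¹(t)))/(g(G⁻¹(t))t²), which is ≥ 0 for t > 0 and < 0 for t < 0. -/
theorem stmt11 (k : ℝ) (hk : 0 < k) (Ginv : ℝ → ℝ)
    (hL : Function.LeftInverse Ginv (G k)) (hR : Function.RightInverse Ginv (G k)) :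
    MonotoneOn (fun t : ℝ => Ginv t / t) (Set.Ioi 0) ∧
    AntitoneOn (fun t : ℝ => Ginv t / t) (Set.Iio 0) ∧
    ∀ t : ℝ, t ≠ 0 →
      deriv (fun s : ℝ => Ginv s / s) t
          = (t - Ginv t * g k (Ginv t)) / (g k (Ginv t) * t ^ 2) ∧
        (0 < t → 0 ≤ (t - Ginv t * g k (Ginv t)) / (g k (Ginv t) * t ^ 2)) ∧
        (t < 0 → (t - Ginv t * g k (Ginv t)) / (g k (Ginv t) * t ^ 2) < 0) := by
  have hderiv : ∀ t ≠ 0, HasDerivAt (fun s => Ginv s / s)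
      ((t - Ginv t * g k (Ginv t)) / (g k (Ginv t) * t ^ 2)) t := fun t ht =>
    hasDerivAt_inverse_integral_div (continuous_g hk) (g_pos hk) hL hR ht
  have hnonneg (t : ℝ) (ht : 0 < t) :
      0 ≤ (t - Ginv t * g k (Ginv t)) / (g k (Ginv t) * t ^ 2) :=
    div_nonneg (sub_nonneg.2 (inverse_integral_mul_le (continuous_g hk) (g_pos hk) hR
      (strictAntiOn_g hk).antitoneOn ht)) (mul_pos (g_pos hk _) (pow_pos ht 2)).le
  have hneg (t : ℝ) (ht : t < 0) :
      (t - Ginv t * g k (Ginv t)) / (g k (Ginv t) * t ^ 2) < 0 :=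
    div_neg_of_neg_of_pos (sub_neg.2 (lt_inverse_integral_mul (continuous_g hk) (g_pos hk) hR
      (strictMonoOn_g hk) ht)) (mul_pos (g_pos hk _) (pow_two_pos_of_ne_zero ht.ne))
  refine ⟨monotoneOn_of_deriv_nonneg (convex_Ioi 0) ?_ ?_ ?_,
    antitoneOn_of_deriv_nonpos (convex_Iio 0) ?_ ?_ ?_,
    fun t ht => ⟨(hderiv t ht).deriv, hnonneg t, hneg t⟩⟩
  · exact fun t ht => (hderiv t ht.ne').continuousAt.continuousWithinAt
  · rw [interior_Ioi]
    exact fun t ht => (hderiv t ht.ne').differentiableAt.differentiableWithinAt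
  · rw [interior_Ioi]
    exact fun t ht => (hderiv t ht.ne').deriv ▸ hnonneg t ht
  · exact fun t ht => (hderiv t ht.ne).continuousAt.continuousWithinAt
  · rw [interior_Iio]
    exact fun t ht => (hderiv t ht.ne).differentiableAt.differentiableWithinAt
  · rw [interior_Iio]
    exact fun t ht => (hderiv t ht.ne).deriv ▸ (hneg t ht).le
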